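/- Let σ be a labeled rooted forest on n vertices and let σ̃ be the labeled rooted tree on n+1 vertices obtained by connecting all roots of σ to a new root labeled n+1. Then the S_{n+1}-representation on the conjugation orbit of σ̃ is isomorphic to the induction from S_n × S_1 to S_{n+1} of the S_n-representation on the conjugation orbit of σ. -/

import Mathlib

/-- Iterate of a partial transformation on `Fin n`. -/
def iterPT {n : ℕ} (f : Fin n → Option (Fin n)) : ℕ → Fin n → Option (Fin n)
  | 0 => fun x => some x
  | k + 1 => fun x => (f x).bind (iterPT f k)

/-- A partial transformation is nilpotent iff its digraph has no directed cycle. -/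
def Nilp {n : ℕ} (f : Fin n → Option (Fin n)) : Prop :=
  ∀ (x : Fin n) (k : ℕ), 0 < k → iterPT f k x ≠ some x

/-- Cardinality of the domain of a partial transformation. -/
def domcard {n : ℕ} (f : Fin n → Option (Fin n)) : ℕ :=
  (Finset.univ.filter fun i => (f i).isSome).card

/-- Conjugation action of the symmetric group on partial transformations. -/
def conjPT {n : ℕ} (w : Equiv.Perm (Fin n)) (f : Fin n → Option (Fin n)) :
    Fin n → Option (Fin n) := fun x => (f (w⁻¹ x)).map w

/-- Attach all roots of a forest on `[n]` to a new root labeled `n+1`. -/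
def tildePT {n : ℕ} (f : Fin n → Option (Fin n)) : Fin (n+1) → Option (Fin (n+1)) :=
  fun x =>
    if h : x.val < n then
      match f ⟨x.val, h⟩ with
      | some j => some j.castSucc
      | none => some (Fin.last n)
    else none

/-!
Every conjugate `g = u · σ̃` has exactly one point outside its domain, its root `u (n+1)`, and the
root of a `w`-fixed conjugate is `w`-fixed. So the orbit of `σ̃` fibres equivariantly over `[n+1]`;
the fibre over `n+1` is the orbit of the stabiliser `S_n × S_1`, which `τ ↦ τ̃` identifies with
`o(σ)`. Conjugation by `t` carries the `t⁻¹wt`-fixed points of that fibre onto the `w`-fixed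
conjugates rooted at `t (n+1)`, and each conjugate has `n!` possible `t`; summing over `t` gives
the induced character formula.
-/

open Equiv

theorem sum_card_subtype_and_eq_card_mul {α β : Type*} [Fintype α] [Fintype β]
    (q : β → Prop) (r : α → β → Prop) (k : ℕ) (hk : ∀ b, q b → Nat.card {a // r a b} = k) :
    ∑ a, Nat.card {b // q b ∧ r a b} = Nat.card {b // q b} * k := by
  classical
  simp only [Nat.card_eq_fintype_card, Fintype.card_subtype] at hk ⊢
  have := Finset.sum_card_bipartiteAbove_eq_sum_card_bipartiteBelow
    (s := Finset.univ) (t := Finset.univ.filter q) r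
  simp only [Finset.bipartiteAbove, Finset.bipartiteBelow, Finset.filter_filter] at this
  rw [this, Finset.sum_congr rfl fun b hb => hk b (Finset.mem_filter.1 hb).2,
    Finset.sum_const, smul_eq_mul]

theorem Equiv.Perm.card_apply_eq {α : Type*} [DecidableEq α] (a b : α) :
    Nat.card {t : Perm α // t a = b} = Nat.card {t : Perm α // t a = a} :=
  Nat.card_congr <| (Equiv.mulLeft (swap a b)).subtypeEquiv fun t => by
    simp [swap_apply_eq_iff]

section Conjugation

variable {m : ℕ}

@[simp]
theorem conjPT_one (g : Fin m → Option (Fin m)) : conjPT 1 g = g := by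
  funext x; simp [conjPT]

theorem conjPT_mul (u v : Perm (Fin m)) (g : Fin m → Option (Fin m)) :
    conjPT (u * v) g = conjPT u (conjPT v g) := by
  funext x; simp [conjPT, Option.map_map, Function.comp_def]

theorem conjPT_apply_eq_none_iff (u : Perm (Fin m)) (g : Fin m → Option (Fin m)) (x : Fin m) :
    conjPT u g x = none ↔ g (u⁻¹ x) = none :=
  Option.map_eq_none_iff

def conjPTEquiv (u : Perm (Fin m)) : (Fin m → Option (Fin m)) ≃ (Fin m → Option (Fin m)) where
  toFun := conjPT u
  invFun := conjPT u⁻¹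
  left_inv g := by simp [← conjPT_mul]
  right_inv g := by simp [← conjPT_mul]

theorem exists_conjPT_eq_conjPT_iff (g₀ g : Fin m → Option (Fin m)) (t : Perm (Fin m)) :
    (∃ v, conjPT v g₀ = conjPT t g) ↔ ∃ v, conjPT v g₀ = g := by
  constructor
  · rintro ⟨v, hv⟩
    exact ⟨t⁻¹ * v, by rw [conjPT_mul, hv, ← conjPT_mul, inv_mul_cancel, conjPT_one]⟩
  · rintro ⟨v, rfl⟩
    exact ⟨t * v, conjPT_mul t v g₀⟩

theorem conjPT_conj_eq_self_iff (w t : Perm (Fin m)) (g : Fin m → Option (Fin m)) :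
    conjPT (t⁻¹ * w * t) g = g ↔ conjPT w (conjPT t g) = conjPT t g := by
  rw [← (conjPTEquiv t).injective.eq_iff]
  simp only [conjPTEquiv, Equiv.coe_fn_mk, ← conjPT_mul]
  group

end Conjugation

section Rooted

variable {m : ℕ} {a : Fin m} {g₀ : Fin m → Option (Fin m)}

theorem conjPT_eq_none_iff_of_root (hroot : ∀ x, g₀ x = none ↔ x = a) (u : Perm (Fin m))
    (x : Fin m) : conjPT u g₀ x = none ↔ x = u a := by
  rw [conjPT_apply_eq_none_iff, hroot, Perm.inv_eq_iff_eq, eq_comm]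

theorem exists_stabilizer_conjPT_eq_iff (hroot : ∀ x, g₀ x = none ↔ x = a)
    (g : Fin m → Option (Fin m)) :
    (∃ v : Perm (Fin m), v a = a ∧ conjPT v g₀ = g) ↔ (∃ v, conjPT v g₀ = g) ∧ g a = none := by
  constructor
  · rintro ⟨v, hv, rfl⟩
    exact ⟨⟨v, rfl⟩, (conjPT_eq_none_iff_of_root hroot v a).2 hv.symm⟩
  · rintro ⟨⟨v, rfl⟩, hva⟩
    exact ⟨v, ((conjPT_eq_none_iff_of_root hroot v a).1 hva).symm, rfl⟩

theorem apply_root_eq_of_conjPT_eq_self (hroot : ∀ x, g₀ x = none ↔ x = a)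
    {u w : Perm (Fin m)} (hw : conjPT w (conjPT u g₀) = conjPT u g₀) : w (u a) = u a := by
  rw [← conjPT_eq_none_iff_of_root hroot u, ← hw, conjPT_apply_eq_none_iff, Perm.inv_def,
    symm_apply_apply, conjPT_eq_none_iff_of_root hroot]

theorem card_stabilizer_orbit_fixed_eq (hroot : ∀ x, g₀ x = none ↔ x = a) (w t : Perm (Fin m)) :
    Nat.card {g // (∃ v : Perm (Fin m), v a = a ∧ conjPT v g₀ = g) ∧ conjPT (t⁻¹ * w * t) g = g} =
      Nat.card {g // ((∃ v, conjPT v g₀ = g) ∧ conjPT w g = g) ∧ g (t a) = none} :=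
  Nat.card_congr <| (conjPTEquiv t).subtypeEquiv fun g => by
    rw [exists_stabilizer_conjPT_eq_iff hroot, conjPT_conj_eq_self_iff]
    simp only [conjPTEquiv, coe_fn_mk, exists_conjPT_eq_conjPT_iff, conjPT_apply_eq_none_iff,
      Perm.inv_def, symm_apply_apply]
    tauto

theorem card_stabilizer_orbit_fixed_eq_zero (hroot : ∀ x, g₀ x = none ↔ x = a)
    {w : Perm (Fin m)} (hw : w a ≠ a) :
    Nat.card {g // (∃ v : Perm (Fin m), v a = a ∧ conjPT v g₀ = g) ∧ conjPT w g = g} = 0 := by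
  refine Nat.card_eq_zero.2 (.inl ⟨?_⟩)
  rintro ⟨_, ⟨v, hv, rfl⟩, hfix⟩
  exact hw (by simpa [hv] using apply_root_eq_of_conjPT_eq_self hroot hfix)

theorem sum_card_orbit_fixed_rooted (hroot : ∀ x, g₀ x = none ↔ x = a) (w : Perm (Fin m)) :
    ∑ t : Perm (Fin m),
        Nat.card {g // ((∃ v, conjPT v g₀ = g) ∧ conjPT w g = g) ∧ g (t a) = none} =
      Nat.card {g // (∃ v, conjPT v g₀ = g) ∧ conjPT w g = g} *
        Nat.card {u : Perm (Fin m) // u a = a} := by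
  refine sum_card_subtype_and_eq_card_mul _ _ _ fun g ⟨⟨u, hu⟩, _⟩ => ?_
  subst hu
  simp only [conjPT_eq_none_iff_of_root hroot]
  exact Perm.card_apply_eq a (u a)

theorem card_stabilizer_mul_card_orbit_fixed (hroot : ∀ x, g₀ x = none ↔ x = a)
    (w : Perm (Fin m)) :
    Nat.card {u : Perm (Fin m) // u a = a} *
        Nat.card {g // (∃ v, conjPT v g₀ = g) ∧ conjPT w g = g} =
      ∑ t : Perm (Fin m), if (t⁻¹ * w * t) a = a then
          Nat.card {g // (∃ v : Perm (Fin m), v a = a ∧ conjPT v g₀ = g) ∧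
            conjPT (t⁻¹ * w * t) g = g}
        else 0 := by
  rw [mul_comm, ← sum_card_orbit_fixed_rooted hroot w]
  refine Finset.sum_congr rfl fun t _ => ?_
  rw [ite_eq_left_iff.2 fun h => (card_stabilizer_orbit_fixed_eq_zero hroot h).symm,
    card_stabilizer_orbit_fixed_eq hroot]

end Rooted

section Tilde

variable {n : ℕ}

@[simp]
theorem tildePT_last (f : Fin n → Option (Fin n)) : tildePT f (Fin.last n) = none := by
  simp [tildePT]

@[simp]
theorem tildePT_castSucc (f : Fin n → Option (Fin n)) (z : Fin n) :
    tildePT f z.castSucc = some (((f z).map Fin.castSucc).getD (Fin.last n)) := by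
  simp only [tildePT, Fin.val_castSucc, z.isLt, dite_true, Fin.eta]
  cases f z <;> rfl

theorem tildePT_eq_none_iff (f : Fin n → Option (Fin n)) (x : Fin (n+1)) :
    tildePT f x = none ↔ x = Fin.last n := by
  induction x using Fin.lastCases with
  | last => simp
  | cast i => simp [(Fin.castSucc_lt_last i).ne]

def extendPerm (v : Perm (Fin n)) : Perm (Fin (n+1)) :=
  finSuccEquivLast.symm.permCongr v.optionCongr

@[simp]
theorem extendPerm_last (v : Perm (Fin n)) : extendPerm v (Fin.last n) = Fin.last n := by
  simp [extendPerm, permCongr_apply]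

@[simp]
theorem extendPerm_castSucc (v : Perm (Fin n)) (i : Fin n) :
    extendPerm v i.castSucc = (v i).castSucc := by
  simp [extendPerm, permCongr_apply]

theorem extendPerm_inv (v : Perm (Fin n)) : (extendPerm v)⁻¹ = extendPerm v⁻¹ := by
  refine (eq_inv_of_mul_eq_one_left ?_).symm
  ext x
  induction x using Fin.lastCases <;> simp

theorem exists_extendPerm_eq {v : Perm (Fin (n+1))} (hv : v (Fin.last n) = Fin.last n) :
    ∃ v', extendPerm v' = v := by
  set p := finSuccEquivLast.permCongr v with hp
  have hp_none : p none = none := by simp [hp, permCongr_apply, hv]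
  refine ⟨removeNone p, ?_⟩
  rw [extendPerm, map_equiv_removeNone, hp_none, swap_self, ← Perm.one_def, one_mul, hp,
    ← permCongr_symm, symm_apply_apply]

theorem conjPT_extendPerm_tildePT (v : Perm (Fin n)) (f : Fin n → Option (Fin n)) :
    conjPT (extendPerm v) (tildePT f) = tildePT (conjPT v f) := by
  funext x
  rw [conjPT, extendPerm_inv]
  induction x using Fin.lastCases with
  | last => simp
  | cast y =>
    simp only [extendPerm_castSucc, tildePT_castSucc, conjPT]
    cases f (v⁻¹ y) <;> simp

end Tilde

theorem exists_stabilizer_conjPT_tildePT_iff {n : ℕ} (f : Fin n → Option (Fin n))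
    (g : Fin (n+1) → Option (Fin (n+1))) :
    (∃ v : Perm (Fin (n+1)), v (Fin.last n) = Fin.last n ∧ conjPT v (tildePT f) = g) ↔
      ∃ x, (∃ v' : Perm (Fin n), conjPT v' f = x) ∧ g = tildePT x := by
  constructor
  · rintro ⟨v, hv, rfl⟩
    obtain ⟨v', rfl⟩ := exists_extendPerm_eq hv
    exact ⟨_, ⟨v', rfl⟩, conjPT_extendPerm_tildePT v' f⟩
  · rintro ⟨x, ⟨v', rfl⟩, rfl⟩
    exact ⟨extendPerm v', extendPerm_last v', conjPT_extendPerm_tildePT v' f⟩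

/-- `S_n × S_1` is the stabiliser of `Fin.last n`. Part (b) is the isomorphism in character form:
permutation characters count fixed points, and the character induced from `H ≤ G` is
`w ↦ |H|⁻¹ ∑_{t ∈ G, t⁻¹wt ∈ H} χ(t⁻¹wt)`. -/
theorem stmt8_general {n : ℕ} (f : Fin n → Option (Fin n)) :
    (∀ g : Fin (n+1) → Option (Fin (n+1)),
      (∃ v : Equiv.Perm (Fin (n+1)), v (Fin.last n) = Fin.last n ∧
          conjPT v (tildePT f) = g) ↔
      (∃ x : Fin n → Option (Fin n),
          (∃ v' : Equiv.Perm (Fin n), conjPT v' f = x) ∧ g = tildePT x)) ∧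
    ∀ w : Equiv.Perm (Fin (n+1)),
      Nat.card {u : Equiv.Perm (Fin (n+1)) // u (Fin.last n) = Fin.last n} *
        Nat.card {g : Fin (n+1) → Option (Fin (n+1)) //
          (∃ v : Equiv.Perm (Fin (n+1)), conjPT v (tildePT f) = g) ∧ conjPT w g = g} =
      ∑ t : Equiv.Perm (Fin (n+1)),
        if (t⁻¹ * w * t) (Fin.last n) = Fin.last n then
          Nat.card {g : Fin (n+1) → Option (Fin (n+1)) //
            (∃ v : Equiv.Perm (Fin (n+1)), v (Fin.last n) = Fin.last n ∧
                conjPT v (tildePT f) = g) ∧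
            conjPT (t⁻¹ * w * t) g = g}
        else 0 :=
  ⟨exists_stabilizer_conjPT_tildePT_iff f,
    card_stabilizer_mul_card_orbit_fixed (tildePT_eq_none_iff f)⟩

/-- for a labeled rooted forest `σ` (nilpotent `f`) on `n` vertices,
the `S_{n+1}`-representation on the conjugation orbit of `σ̃ = tildePT f` is
induced from the subgroup `S_n × S_1` (the stabilizer of the label `n+1`) acting
on its orbit of `σ̃`, which is a copy of the orbit `o(σ)`.  We state this as:
(a) the `S_n × S_1`-orbit of `σ̃` is exactly `{τ̃ : τ ∈ o(σ)}`, and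
(b) the character (fixed-point count) of the `S_{n+1}`-orbit equals the induced
character from `S_n × S_1`. -/
theorem stmt8 {n : ℕ} (f : Fin n → Option (Fin n)) (hf : Nilp f) :
    (∀ g : Fin (n+1) → Option (Fin (n+1)),
      (∃ v : Equiv.Perm (Fin (n+1)), v (Fin.last n) = Fin.last n ∧
          conjPT v (tildePT f) = g) ↔
      (∃ x : Fin n → Option (Fin n),
          (∃ v' : Equiv.Perm (Fin n), conjPT v' f = x) ∧ g = tildePT x)) ∧
    ∀ w : Equiv.Perm (Fin (n+1)),
      Nat.card {u : Equiv.Perm (Fin (n+1)) // u (Fin.last n) = Fin.last n} *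
        Nat.card {g : Fin (n+1) → Option (Fin (n+1)) //
          (∃ v : Equiv.Perm (Fin (n+1)), conjPT v (tildePT f) = g) ∧ conjPT w g = g} =
      ∑ t : Equiv.Perm (Fin (n+1)),
        if (t⁻¹ * w * t) (Fin.last n) = Fin.last n then
          Nat.card {g : Fin (n+1) → Option (Fin (n+1)) //
            (∃ v : Equiv.Perm (Fin (n+1)), v (Fin.last n) = Fin.last n ∧
                conjPT v (tildePT f) = g) ∧
            conjPT (t⁻¹ * w * t) g = g}
        else 0 :=
  stmt8_general f
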